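/- The product Bernoulli(p) measure ψ on {0,1}^L, given by ψ(r) = p^{Σ_x r(x)} q^{L − Σ_x r(x)}, is stationary for the driven-dissipative transition kernel W of the DSS: Wψ = ψ. Moreover ψ(r) > 0 for every r ∈ {0,1}^L, so the set of recurrent configurations is all of {0,1}^L. -/

import Mathlib

/-!
With the leftmost waiting particle always moved first, an avalanche sweeps the chain from left
to right: while the leftmost waiting particles sit at site `i`, every site left of `i` is final
and every site right of `i + 1` is untouched. Under `ψ` the sites are independent, and site `i`
ends occupied with probability `p` whether it receives no particle (it keeps its `ψ`-distributed
value) or any positive number of them (its last particle meets an empty site and settles with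
probability `p`). Moreover what site `i` passes on to `i + 1` does not affect the law of the
sites to its right, so a right-to-left induction on the position of the sweep shows that the
final configuration is again `ψ`-distributed.
-/

namespace DSS

/-- A state of the DSS on `L` sites: a stable field `z : Fin L → Bool` together with a
finite multiset `w` of waiting particles (particles past site `L` have left the system). -/
structure State (L : ℕ) where
  z : Fin L → Bool
  w : Multiset (Fin L)

variable {L : ℕ}

/-- The multiset holding the right neighbour of `x`; empty if the particle leaves the system. -/
def succSite (L : ℕ) (x : Fin L) : Multiset (Fin L) :=
  if h : x.val + 1 < L then {(⟨x.val + 1, h⟩ : Fin L)} else 0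

/-- Evolution of a waiting particle at `x` when `z x = 1`: the waiting particle moves to
`x+1` and the stable particle at `x` becomes a waiting particle at `x`. -/
def topple (s : State L) (x : Fin L) : State L :=
  ⟨Function.update s.z x false, s.w + succSite L x⟩

/-- Evolution of a waiting particle at `x` when `z x = 0`, settling branch (probability p). -/
def settle (s : State L) (x : Fin L) : State L :=
  ⟨Function.update s.z x true, s.w.erase x⟩

/-- Evolution of a waiting particle at `x` when `z x = 0`, jumping branch (probability q). -/
def jump (s : State L) (x : Fin L) : State L :=
  ⟨s.z, s.w.erase x + succSite L x⟩

/-- `stabilizeAux p q R n s c` is the probability that, evolving one waiting particle at a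
time (the particle being selected by the rule `R`), the process started from `s` reaches
within `n` elementary steps a stable state whose stable field is `c`. -/
noncomputable def stabilizeAux (p q : ℝ) (R : State L → Option (Fin L)) :
    ℕ → State L → (Fin L → Bool) → ℝ
  | 0, s, c => if s.w = 0 ∧ s.z = c then 1 else 0
  | n + 1, s, c =>
    match R s with
    | none => if s.z = c then 1 else 0
    | some x =>
      if s.z x then stabilizeAux p q R n (topple s x) c
      else p * stabilizeAux p q R n (settle s x) c
        + q * stabilizeAux p q R n (jump s x) c

/-- The canonical evolution rule: evolve the leftmost waiting particle. -/
def minRule (s : State L) : Option (Fin L) :=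
  if h : s.w = 0 then none
  else some (s.w.toFinset.min'
    (Finset.nonempty_iff_ne_empty.mpr (by simpa [Multiset.toFinset_eq_empty] using h)))

/-- A termination measure: the stabilization process started from `s` ends after at most
`fuel s` elementary steps, whatever the rule and the randomness. -/
def potential (s : State L) : ℕ :=
  (s.w.map fun x => L + 1 - x.val).sum + ∑ x : Fin L, (if s.z x then L + 1 - x.val else 0)

def fuel (s : State L) : ℕ := 2 * potential s + Multiset.card s.w

/-- Add one waiting particle at site `1` (index `0`). -/
def addGrain (r : Fin L → Bool) : State L :=
  ⟨r, if h : 0 < L then {(⟨0, h⟩ : Fin L)} else 0⟩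

/-- The driven-dissipative transition kernel `W` of the DSS: add a particle at site 1 and
stabilize. -/
noncomputable def Wker (p q : ℝ) (r r' : Fin L → Bool) : ℝ :=
  stabilizeAux p q minRule (fuel (addGrain r)) (addGrain r) r'

/-- `W` as a matrix on stable configurations. -/
noncomputable def Wmat (p q : ℝ) (L : ℕ) :
    Matrix (Fin L → Bool) (Fin L → Bool) ℝ :=
  Matrix.of fun r r' => Wker p q r r'

/-- The product Bernoulli(p) measure `ψ(r) = p^(Σ r) q^(L - Σ r)`. -/
noncomputable def psi (p q : ℝ) {L : ℕ} (r : Fin L → Bool) : ℝ :=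
  p ^ (Finset.univ.filter fun x => r x = true).card *
    q ^ (L - (Finset.univ.filter fun x => r x = true).card)

open Finset Function

def waitingPotential (w : Multiset (Fin L)) : ℕ := (w.map fun x => L + 1 - x.val).sum

def stablePotential (z : Fin L → Bool) : ℕ := ∑ x : Fin L, if z x then L + 1 - x.val else 0

lemma potential_eq (s : State L) :
    potential s = waitingPotential s.w + stablePotential s.z := rfl

lemma waitingPotential_add (a b : Multiset (Fin L)) :
    waitingPotential (a + b) = waitingPotential a + waitingPotential b := by
  simp [waitingPotential]

lemma waitingPotential_erase {w : Multiset (Fin L)} {x : Fin L} (hx : x ∈ w) :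
    waitingPotential w = (L + 1 - x.val) + waitingPotential (w.erase x) := by
  conv_lhs => rw [← Multiset.cons_erase hx]
  simp [waitingPotential]

lemma waitingPotential_succSite_lt (x : Fin L) :
    waitingPotential (succSite L x) < L + 1 - x.val := by
  have := x.isLt
  unfold waitingPotential succSite
  split <;> simp only [Multiset.map_singleton, Multiset.sum_singleton, Multiset.map_zero,
    Multiset.sum_zero] <;> omega

lemma lt_of_mem_succSite {x y : Fin L} (h : y ∈ succSite L x) : x < y := by
  unfold succSite at h
  split at h
  · rw [Multiset.mem_singleton.mp h, Fin.lt_def]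
    exact Nat.lt_succ_self _
  · simp at h

lemma card_succSite_le_one (x : Fin L) : Multiset.card (succSite L x) ≤ 1 := by
  unfold succSite
  split <;> simp

lemma stablePotential_update_add (z : Fin L → Bool) (x : Fin L) (b : Bool) :
    stablePotential (update z x b) + (if z x then L + 1 - x.val else 0)
      = stablePotential z + (if b then L + 1 - x.val else 0) := by
  let f : Fin L → ℕ := fun y => if z y then L + 1 - y.val else 0
  have hupd : (fun y => if update z x b y then L + 1 - y.val else 0)
      = update f x (if b then L + 1 - x.val else 0) :=
    funext fun y => apply_update (fun y (v : Bool) => if v then L + 1 - y.val else 0) z x b y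
  unfold stablePotential
  rw [hupd, sum_update_of_mem (mem_univ x), sum_eq_add_sum_sdiff_singleton_of_mem (mem_univ x) f]
  ring

lemma fuel_topple_lt {s : State L} {x : Fin L} (hz : s.z x = true) :
    fuel (topple s x) < fuel s := by
  have hpot := stablePotential_update_add s.z x false
  have := waitingPotential_succSite_lt x
  have := card_succSite_le_one x
  simp only [hz, if_true, Bool.false_eq_true, if_false, add_zero] at hpot
  simp only [fuel, potential_eq, topple, waitingPotential_add, Multiset.card_add]
  omega

lemma fuel_settle_lt {s : State L} {x : Fin L} (hx : x ∈ s.w) :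
    fuel (settle s x) < fuel s := by
  have hpot := stablePotential_update_add s.z x true
  have := waitingPotential_erase hx
  have := Multiset.card_erase_add_one hx
  simp only [if_true] at hpot
  simp only [fuel, potential_eq, settle]
  split_ifs at hpot <;> omega

lemma fuel_jump_lt {s : State L} {x : Fin L} (hx : x ∈ s.w) :
    fuel (jump s x) < fuel s := by
  have := waitingPotential_erase hx
  have := waitingPotential_succSite_lt x
  have := card_succSite_le_one x
  have := Multiset.card_erase_add_one hx
  simp only [fuel, potential_eq, jump, waitingPotential_add, Multiset.card_add]
  omega

section Stabilization

variable (p q : ℝ) (c : Fin L → Bool)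

lemma minRule_eq_none_iff {s : State L} : minRule s = none ↔ s.w = 0 := by
  unfold minRule
  split_ifs with h <;> simp [h]

lemma mem_of_minRule_eq_some {s : State L} {x : Fin L} (h : minRule s = some x) : x ∈ s.w := by
  unfold minRule at h
  split_ifs at h
  rw [Option.some_inj] at h
  rw [← Multiset.mem_toFinset, ← h]
  exact min'_mem _ _

lemma minRule_eq_some_of_forall_le {s : State L} {x : Fin L} (hx : x ∈ s.w)
    (hle : ∀ y ∈ s.w, x ≤ y) : minRule s = some x := by
  have hw : s.w ≠ 0 := by rintro h; simp [h] at hx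
  simp only [minRule, hw, dite_false, Option.some_inj]
  exact le_antisymm (min'_le _ _ (Multiset.mem_toFinset.mpr hx))
    (le_min' _ _ _ fun y hy => hle y (Multiset.mem_toFinset.mp hy))

lemma stabilizeAux_of_w_eq_zero {s : State L} (h : s.w = 0) (n : ℕ) :
    stabilizeAux p q minRule n s c = if s.z = c then 1 else 0 := by
  cases n <;> simp [stabilizeAux, h, minRule_eq_none_iff.mpr h]

lemma stabilizeAux_succ_of_minRule_eq_some {s : State L} {x : Fin L} (h : minRule s = some x)
    (n : ℕ) :
    stabilizeAux p q minRule (n + 1) s c =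
      if s.z x then stabilizeAux p q minRule n (topple s x) c
      else p * stabilizeAux p q minRule n (settle s x) c
        + q * stabilizeAux p q minRule n (jump s x) c := by
  simp only [stabilizeAux, h]

lemma stabilizeAux_eq_of_fuel_le :
    ∀ (n m : ℕ) (s : State L), fuel s ≤ n → fuel s ≤ m →
      stabilizeAux p q minRule n s c = stabilizeAux p q minRule m s c := by
  intro n
  induction n with
  | zero =>
    intro m s hn _
    have hw : s.w = 0 := Multiset.card_eq_zero.mp (by unfold fuel at hn; omega)
    rw [stabilizeAux_of_w_eq_zero p q c hw, stabilizeAux_of_w_eq_zero p q c hw]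
  | succ n ih =>
    intro m s hn hm
    cases hx : minRule s with
    | none =>
      have hw := minRule_eq_none_iff.mp hx
      rw [stabilizeAux_of_w_eq_zero p q c hw, stabilizeAux_of_w_eq_zero p q c hw]
    | some x =>
      have hxw := mem_of_minRule_eq_some hx
      have hset := fuel_settle_lt hxw
      have hjump := fuel_jump_lt hxw
      obtain ⟨m, rfl⟩ : ∃ m', m = m' + 1 := Nat.exists_eq_add_one.mpr (by omega)
      rw [stabilizeAux_succ_of_minRule_eq_some p q c hx,
        stabilizeAux_succ_of_minRule_eq_some p q c hx]
      split_ifs with hz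
      · have := fuel_topple_lt hz
        exact ih m _ (by omega) (by omega)
      · rw [ih m (settle s x) (by omega) (by omega), ih m (jump s x) (by omega) (by omega)]

noncomputable def stabilize (s : State L) : ℝ := stabilizeAux p q minRule (fuel s) s c

lemma stabilize_of_w_eq_zero {s : State L} (h : s.w = 0) :
    stabilize p q c s = if s.z = c then 1 else 0 :=
  stabilizeAux_of_w_eq_zero p q c h _

lemma stabilize_of_minRule_eq_some {s : State L} {x : Fin L} (h : minRule s = some x) :
    stabilize p q c s =
      if s.z x then stabilize p q c (topple s x)
      else p * stabilize p q c (settle s x) + q * stabilize p q c (jump s x) := by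
  have hxw := mem_of_minRule_eq_some h
  have hset := fuel_settle_lt hxw
  have hjump := fuel_jump_lt hxw
  obtain ⟨n, hn⟩ : ∃ n, fuel s = n + 1 := Nat.exists_eq_add_one.mpr (by omega)
  rw [stabilize, hn, stabilizeAux_succ_of_minRule_eq_some p q c h]
  split_ifs with hz
  · have := fuel_topple_lt hz
    exact stabilizeAux_eq_of_fuel_le p q c _ _ _ (by omega) le_rfl
  · rw [stabilizeAux_eq_of_fuel_le p q c n (fuel (settle s x)) _ (by omega) le_rfl,
      stabilizeAux_eq_of_fuel_le p q c n (fuel (jump s x)) _ (by omega) le_rfl]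
    rfl

/-- Particles only move to the right, so site `x` never changes again. -/
lemma stabilizeAux_eq_zero_of_frozen {x : Fin L} :
    ∀ (n : ℕ) (s : State L), s.z x ≠ c x → (∀ y ∈ s.w, x < y) →
      stabilizeAux p q minRule n s c = 0 := by
  intro n
  induction n with
  | zero =>
    intro s hz _
    simp only [stabilizeAux, ite_eq_right_iff, and_imp]
    exact fun _ hzc => absurd (congrFun hzc x) hz
  | succ n ih =>
    intro s hz hw
    cases hy : minRule s with
    | none =>
      rw [stabilizeAux_of_w_eq_zero p q c (minRule_eq_none_iff.mp hy), if_neg]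
      exact fun hzc => hz (congrFun hzc x)
    | some y =>
      have hxy : x < y := hw y (mem_of_minRule_eq_some hy)
      have hzx : ∀ b, update s.z y b x ≠ c x := fun b => by rwa [update_of_ne hxy.ne]
      have hsucc : ∀ y' ∈ succSite L y, x < y' := fun y' h => hxy.trans (lt_of_mem_succSite h)
      have herase : ∀ y' ∈ s.w.erase y, x < y' :=
        fun y' h => hw y' (Multiset.mem_of_mem_erase h)
      rw [stabilizeAux_succ_of_minRule_eq_some p q c hy]
      split_ifs
      · refine ih _ (hzx false) fun y' h => ?_
        rcases Multiset.mem_add.mp h with h | h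
        exacts [hw y' h, hsucc y' h]
      · rw [ih (settle s y) (hzx true) herase, ih (jump s y) hz fun y' h => ?_, mul_zero,
          mul_zero, add_zero]
        rcases Multiset.mem_add.mp h with h | h
        exacts [herase y' h, hsucc y' h]

lemma stabilize_eq_zero_of_frozen {s : State L} {x : Fin L} (hz : s.z x ≠ c x)
    (hw : ∀ y ∈ s.w, x < y) : stabilize p q c s = 0 :=
  stabilizeAux_eq_zero_of_frozen p q c _ s hz hw

end Stabilization

lemma sum_filter_apply_eq_of_update_invariant {ι M : Type*} [Fintype ι] [DecidableEq ι]
    [AddCommMonoid M] (i : ι) (G : (ι → Bool) → M) (hG : ∀ r v, G (update r i v) = G r)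
    (b b' : Bool) : ∑ r with r i = b, G r = ∑ r with r i = b', G r := by
  refine sum_nbij' (fun r => update r i b') (fun r => update r i b) ?_ ?_ ?_ ?_ ?_ <;>
    simp only [mem_filter, mem_univ, true_and, update_self, update_idem, implies_true]
  · exact fun r hr => update_eq_self_iff.mpr hr.symm
  · exact fun r hr => update_eq_self_iff.mpr hr.symm
  · exact fun r _ => (hG r b').symm

section Psi

variable (p q : ℝ)

def weight (b : Bool) : ℝ := if b then p else q

lemma psi_eq_prod (r : Fin L → Bool) : psi p q r = ∏ x, weight p q (r x) := by
  have hcard := card_filter_add_card_filter_not (s := (univ : Finset (Fin L))) (fun x => r x)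
  rw [card_univ, Fintype.card_fin] at hcard
  unfold weight
  rw [psi, prod_ite, prod_const, prod_const]
  congr 2
  omega

lemma sum_psi (hpq : p + q = 1) : ∑ r : Fin L → Bool, psi p q r = 1 := by
  simp_rw [psi_eq_prod]
  rw [← Fintype.prod_sum fun (_ : Fin L) b => weight p q b]
  simp [weight, hpq]

lemma sum_psi_mul_apply (hpq : p + q = 1) (i : Fin L) (F : Bool → (Fin L → Bool) → ℝ)
    (hF : ∀ b r v, F b (update r i v) = F b r) :
    ∑ r, psi p q r * F (r i) r
      = p * ∑ r, psi p q r * F true r + q * ∑ r, psi p q r * F false r := by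
  set rest : (Fin L → Bool) → ℝ := fun r => ∏ x ∈ univ.erase i, weight p q (r x)
  have hrest : ∀ r v, rest (update r i v) = rest r := fun r v =>
    prod_congr rfl fun x hx => by rw [update_of_ne (ne_of_mem_erase hx)]
  have hfiber : ∀ Φ : Bool → (Fin L → Bool) → ℝ, ∑ r, psi p q r * Φ (r i) r
      = ∑ b, weight p q b * ∑ r with r i = b, rest r * Φ b r := by
    intro Φ
    rw [← sum_fiberwise univ (fun r => r i)]
    refine sum_congr rfl fun b _ => ?_
    rw [mul_sum]
    refine sum_congr rfl fun r hr => ?_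
    rw [← (mem_filter.mp hr).2, psi_eq_prod, ← mul_prod_erase univ _ (mem_univ i)]
    ring
  have hconst : ∀ b, ∑ r, psi p q r * F b r = ∑ r with r i = b, rest r * F b r := by
    intro b
    have hinv := sum_filter_apply_eq_of_update_invariant i (fun r => rest r * F b r)
      (fun r v => by simp only [hrest, hF])
    rw [hfiber fun _ => F b, Fintype.sum_bool, hinv false b, hinv true b, ← add_mul]
    simp [weight, hpq]
  rw [hfiber, Fintype.sum_bool, hconst, hconst]
  rfl

end Psi

def atSite (L m : ℕ) : Multiset (Fin L) := if h : m < L then {⟨m, h⟩} else 0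

def pile (i : Fin L) (k j : ℕ) : Multiset (Fin L) := k • {i} + j • succSite L i

lemma succSite_eq_atSite (x : Fin L) : succSite L x = atSite L (x.val + 1) := rfl

lemma atSite_val (i : Fin L) : atSite L i.val = {i} := dif_pos i.isLt

lemma le_of_mem_pile {i y : Fin L} {k j : ℕ} (h : y ∈ pile i k j) : i ≤ y := by
  rcases Multiset.mem_add.mp h with h | h
  · exact (Multiset.mem_singleton.mp (Multiset.mem_of_mem_nsmul h)).ge
  · exact (lt_of_mem_succSite (Multiset.mem_of_mem_nsmul h)).le

lemma lt_of_mem_pile_zero {i y : Fin L} {j : ℕ} (h : y ∈ pile i 0 j) : i < y := by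
  rw [pile, zero_nsmul, zero_add] at h
  exact lt_of_mem_succSite (Multiset.mem_of_mem_nsmul h)

lemma minRule_pile (z : Fin L → Bool) (i : Fin L) (k j : ℕ) :
    minRule ⟨z, pile i (k + 1) j⟩ = some i :=
  minRule_eq_some_of_forall_le
    (Multiset.mem_add.mpr
      (Or.inl (Multiset.mem_nsmul.mpr ⟨k.succ_ne_zero, Multiset.mem_singleton_self i⟩)))
    fun _ => le_of_mem_pile

lemma pile_erase (i : Fin L) (k j : ℕ) : (pile i (k + 1) j).erase i = pile i k j := by
  rw [pile, succ_nsmul', add_assoc, Multiset.singleton_add, Multiset.erase_cons_head, pile]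

lemma pile_add_succSite (i : Fin L) (k j : ℕ) :
    pile i k j + succSite L i = pile i k (j + 1) := by
  rw [pile, pile, succ_nsmul, add_assoc]

def splice (m : ℕ) (c r : Fin L → Bool) : Fin L → Bool :=
  fun x => if x.val < m then c x else r x

section Splice

variable (c r : Fin L → Bool)

lemma splice_zero : splice 0 c r = r := funext fun _ => if_neg (Nat.not_lt_zero _)

lemma splice_length : splice L c r = c := funext fun x => if_pos x.isLt

lemma splice_apply_self (i : Fin L) : splice i c r i = r i := if_neg (lt_irrefl _)

lemma update_splice_self (i : Fin L) : update (splice i c r) i (c i) = splice (i.val + 1) c r := by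
  funext x
  rcases eq_or_ne x i with rfl | hne
  · simp [splice]
  · have : x.val ≠ i.val := Fin.val_ne_of_ne hne
    simp only [update_of_ne hne, splice]
    split_ifs <;> first | rfl | omega

lemma splice_update (i : Fin L) (v : Bool) :
    splice i c (update r i v) = update (splice i c r) i v := by
  funext x
  rcases eq_or_ne x i with rfl | hne
  · simp [splice]
  · simp [splice, update_of_ne hne]

end Splice

section Reach

variable (p q : ℝ) (c : Fin L → Bool)

/-- The `ψ`-average over the sites from `m` on of the probability of stabilizing to `c`,
when the sites left of `m` already agree with `c` and `k` particles wait at `m`. -/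
noncomputable def reachProb (m k : ℕ) : ℝ :=
  ∑ r, psi p q r * stabilize p q c ⟨splice m c r, k • atSite L m⟩

noncomputable def reachProbAt (i : Fin L) (k j : ℕ) (b : Bool) : ℝ :=
  ∑ r, psi p q r * stabilize p q c ⟨update (splice i c r) i b, pile i k j⟩

lemma reachProb_eq_add (hpq : p + q = 1) (i : Fin L) (k : ℕ) :
    reachProb p q c i k = p * reachProbAt p q c i k 0 true + q * reachProbAt p q c i k 0 false := by
  have hF : ∀ b r v, stabilize p q c ⟨update (splice i c (update r i v)) i b, pile i k 0⟩
      = stabilize p q c ⟨update (splice i c r) i b, pile i k 0⟩ := by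
    intro b r v
    rw [splice_update, update_idem]
  rw [reachProbAt, reachProbAt, ← sum_psi_mul_apply p q hpq i
    (fun b r => stabilize p q c ⟨update (splice i c r) i b, pile i k 0⟩) hF, reachProb]
  refine sum_congr rfl fun r _ => ?_
  rw [← splice_apply_self c r i, update_eq_self, atSite_val, pile, zero_nsmul, add_zero]

lemma reachProbAt_zero (i : Fin L) (j : ℕ) (b : Bool) :
    reachProbAt p q c i 0 j b = if b = c i then reachProb p q c (i.val + 1) j else 0 := by
  split_ifs with hb
  · refine sum_congr rfl fun r _ => ?_
    rw [hb, update_splice_self, pile, zero_nsmul, zero_add, succSite_eq_atSite]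
  · refine sum_eq_zero fun r _ => ?_
    rw [stabilize_eq_zero_of_frozen p q c (x := i) (by simpa using hb)
      fun _ => lt_of_mem_pile_zero, mul_zero]

lemma reachProbAt_succ_true (i : Fin L) (k j : ℕ) :
    reachProbAt p q c i (k + 1) j true = reachProbAt p q c i (k + 1) (j + 1) false := by
  refine sum_congr rfl fun r _ => ?_
  rw [stabilize_of_minRule_eq_some p q c (minRule_pile _ i k j)]
  simp only [update_self, if_true, topple, update_idem, pile_add_succSite]

lemma reachProbAt_succ_false (i : Fin L) (k j : ℕ) :
    reachProbAt p q c i (k + 1) j false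
      = p * reachProbAt p q c i k j true + q * reachProbAt p q c i k (j + 1) false := by
  simp only [reachProbAt, mul_sum, ← sum_add_distrib]
  refine sum_congr rfl fun r _ => ?_
  rw [stabilize_of_minRule_eq_some p q c (minRule_pile _ i k j)]
  simp only [update_self, Bool.false_eq_true, if_false, settle, jump, update_idem, pile_erase,
    pile_add_succSite]
  ring

/-- The last particle to leave site `i` always finds it empty (a toppling empties the site
without changing the number of particles waiting there), so the site ends occupied with
probability `p`. -/
lemma reachProbAt_succ (hpq : p + q = 1) (i : Fin L) {T : ℝ}
    (hT : ∀ j, reachProb p q c (i.val + 1) j = T) (k j : ℕ) (b : Bool) :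
    reachProbAt p q c i (k + 1) j b = weight p q (c i) * T := by
  induction k generalizing j b with
  | zero =>
    cases b
    · rw [reachProbAt_succ_false, reachProbAt_zero, reachProbAt_zero, hT, hT]
      cases c i <;> simp [weight]
    · rw [reachProbAt_succ_true, reachProbAt_succ_false, reachProbAt_zero, reachProbAt_zero,
        hT, hT]
      cases c i <;> simp [weight]
  | succ k ih =>
    cases b
    · rw [reachProbAt_succ_false, ih, ih, ← add_mul, hpq, one_mul]
    · rw [reachProbAt_succ_true, reachProbAt_succ_false, ih, ih, ← add_mul, hpq, one_mul]

lemma reachProb_eq_prod (hpq : p + q = 1) {m : ℕ} (hm : m ≤ L) (k : ℕ) :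
    reachProb p q c m k = ∏ x with m ≤ x.val, weight p q (c x) := by
  induction hm using Nat.decreasingInduction generalizing k with
  | self =>
    have hempty : univ.filter (fun x : Fin L => L ≤ x.val) = ∅ :=
      filter_false_of_mem fun x _ => not_le.mpr x.isLt
    have hstable : ∀ r, stabilize p q c ⟨splice L c r, k • atSite L L⟩ = 1 := fun r => by
      rw [stabilize_of_w_eq_zero p q c (by simp [atSite]), if_pos (splice_length c r)]
    simp only [reachProb, hstable, mul_one, hempty, prod_empty]
    exact sum_psi p q hpq
  | of_succ m hm ih =>
    set i : Fin L := ⟨m, hm⟩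
    have htail : univ.filter (fun x : Fin L => m ≤ x.val)
        = insert i (univ.filter fun x : Fin L => m + 1 ≤ x.val) := by
      ext x
      simp only [mem_filter, mem_insert, mem_univ, true_and, Fin.ext_iff, i]
      omega
    rw [htail, prod_insert (by simp [i]), reachProb_eq_add p q c hpq i]
    cases k with
    | zero =>
      rw [reachProbAt_zero, reachProbAt_zero, ih]
      cases c i <;> simp [weight]
    | succ k =>
      rw [reachProbAt_succ p q c hpq i ih, reachProbAt_succ p q c hpq i ih, ← add_mul, hpq,
        one_mul]

end Reach

theorem psi_stationary_and_positive_general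
    (L : ℕ) (p q : ℝ) (hp : 0 < p) (hq : 0 < q) (hpq : p + q = 1) :
    (∀ r' : Fin L → Bool, ∑ r : Fin L → Bool, psi p q r * Wker p q r r' = psi p q r') ∧
    (∀ r : Fin L → Bool, 0 < psi p q r) := by
  refine ⟨fun r' => ?_, fun r => mul_pos (pow_pos hp _) (pow_pos hq _)⟩
  have hW : ∀ r, Wker p q r r' = stabilize p q r' ⟨splice 0 r' r, 1 • atSite L 0⟩ := by
    intro r
    rw [splice_zero, one_nsmul]
    rfl
  calc ∑ r, psi p q r * Wker p q r r' = reachProb p q r' 0 1 := by simp only [hW, reachProb]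
    _ = ∏ x with 0 ≤ x.val, weight p q (r' x) := reachProb_eq_prod p q r' hpq (Nat.zero_le L) 1
    _ = psi p q r' := by simp [psi_eq_prod]

/-- the product Bernoulli(p) measure `ψ` is stationary for the
driven-dissipative kernel `W` of the DSS, and `ψ(r) > 0` for every configuration `r`
(so every configuration is recurrent). -/
theorem psi_stationary_and_positive
    (L : ℕ) (hL : 0 < L) (p q : ℝ) (hp : 0 < p) (hq : 0 < q) (hpq : p + q = 1) :
    (∀ r' : Fin L → Bool, ∑ r : Fin L → Bool, psi p q r * Wker p q r r' = psi p q r') ∧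
    (∀ r : Fin L → Bool, 0 < psi p q r) :=
  psi_stationary_and_positive_general L p q hp hq hpq

end DSS
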